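/- Let d be a positive integer, let γ > 0, r ≥ 0, b ≥ 0, G ≥ 0 be real numbers, and let T be a positive integer. For each 1 ≤ t ≤ T let ℓ_t : ℝ^d → ℝ be a differentiable convex function. Let η_1, …, η_T ∈ ℝ^d be gradient estimates satisfying ‖η_t − ∇ℓ_t(θ_t)‖ ≤ b and ‖η_t‖² ≤ G for all t, let θ_1, …, θ_{T+1} ∈ ℝ^d be generated by θ_{t+1} = θ_t − γ·η_t, and let w_1, …, w_{T+1} ∈ ℝ^d be comparators, with ‖θ_t‖ ≤ r and ‖w_t‖ ≤ r for all 1 ≤ t ≤ T+1. Then Σ_{t=1}^{T} (ℓ_t(θ_t) − ℓ_t(w_t)) ≤ 2·T·b·r + (2r²)/γ + (2r/γ)·Σ_{t=1}^{T} ‖w_t − w_{t+1}‖ + (T·γ·G)/2. -/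

import Mathlib

/-!
Convexity bounds the loss gap `ℓ_t(θ_t) - ℓ_t(w_t)` by `⟪∇ℓ_t(θ_t), θ_t - w_t⟫`. Replacing the
gradient by `η_t` costs at most `b‖θ_t - w_t‖ ≤ 2br`, and expanding `‖θ_{t+1} - w_t‖²` turns
`⟪η_t, θ_t - w_t⟫` into `(‖θ_t - w_t‖² - ‖θ_{t+1} - w_t‖²)/(2γ) + γ‖η_t‖²/2`. Moving the comparator
from `w_t` to `w_{t+1}` changes the squared distance by at most `4r‖w_t - w_{t+1}‖`, after which
the distance terms telescope to at most `‖θ_1 - w_1‖²/(2γ) ≤ 2r²/γ`.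
-/

open Finset
open scoped RealInnerProductSpace

theorem ConvexOn.le_sub_of_hasFDerivAt {E : Type*} [NormedAddCommGroup E] [NormedSpace ℝ E]
    {s : Set E} {f : E → ℝ} {f' : E →L[ℝ] ℝ} {x y : E} (hf : ConvexOn ℝ s f)
    (hx : x ∈ s) (hy : y ∈ s) (hf' : HasFDerivAt f f' x) :
    f' (y - x) ≤ f y - f x := by
  set L : ℝ →ᵃ[ℝ] E := AffineMap.lineMap x y
  have hL0 : L 0 = x := AffineMap.lineMap_apply_zero x y
  have hL1 : L 1 = y := AffineMap.lineMap_apply_one x y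
  have hderiv : HasDerivAt (f ∘ L) (f' (y - x)) 0 :=
    hf'.comp_hasDerivAt_of_eq 0 AffineMap.hasDerivAt_lineMap hL0.symm
  have := (hf.comp_affineMap L).le_slope_of_hasDerivAt (x := 0) (y := 1)
    (by simpa [hL0] using hx) (by simpa [hL1] using hy) one_pos hderiv
  simpa [slope_def_field, hL0, hL1] using this

theorem sq_norm_sub_sq_norm_le {F : Type*} [SeminormedAddCommGroup F] (a b : F) :
    ‖a‖ ^ 2 - ‖b‖ ^ 2 ≤ ‖a - b‖ * (‖a‖ + ‖b‖) := by
  rw [sq_sub_sq, mul_comm]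
  exact mul_le_mul_of_nonneg_right (norm_sub_norm_le a b) (by positivity)

section InnerProductSpace

variable {E : Type*} [NormedAddCommGroup E] [InnerProductSpace ℝ E]

theorem ConvexOn.sub_le_inner_gradient [CompleteSpace E] {f : E → ℝ} {x : E}
    (hf : ConvexOn ℝ Set.univ f) (hfx : DifferentiableAt ℝ f x) (y : E) :
    f x - f y ≤ ⟪gradient f x, x - y⟫ := by
  have := hf.le_sub_of_hasFDerivAt (Set.mem_univ x) (Set.mem_univ y) hfx.hasGradientAt.hasFDerivAt
  rw [InnerProductSpace.toDual_apply_apply, ← neg_sub x y, inner_neg_right] at this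
  linarith

theorem norm_sub_smul_sub_sq (x g w : E) (γ : ℝ) :
    ‖x - γ • g - w‖ ^ 2 = ‖x - w‖ ^ 2 - 2 * γ * ⟪g, x - w⟫ + γ ^ 2 * ‖g‖ ^ 2 := by
  rw [sub_right_comm, norm_sub_sq_real, real_inner_smul_right, real_inner_comm, norm_smul,
    Real.norm_eq_abs, mul_pow, sq_abs]
  ring

theorem ConvexOn.sub_le_of_gradient_step [CompleteSpace E] {f : E → ℝ} {x x' g w w' : E}
    {γ r b G : ℝ} (hf : ConvexOn ℝ Set.univ f) (hfx : DifferentiableAt ℝ f x) (hγ : 0 < γ)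
    (hstep : x' = x - γ • g) (hbias : ‖g - gradient f x‖ ≤ b) (hg : ‖g‖ ^ 2 ≤ G)
    (hx : ‖x‖ ≤ r) (hx' : ‖x'‖ ≤ r) (hw : ‖w‖ ≤ r) (hw' : ‖w'‖ ≤ r) :
    f x - f w ≤ 2 * b * r + (‖x - w‖ ^ 2 - ‖x' - w'‖ ^ 2) / (2 * γ)
      + 2 * r / γ * ‖w - w'‖ + γ * G / 2 := by
  have hsplit : ⟪gradient f x, x - w⟫ = ⟪g, x - w⟫ - ⟪g - gradient f x, x - w⟫ := by
    rw [inner_sub_left]; ring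
  have hdescent : ⟪g, x - w⟫ = (‖x - w‖ ^ 2 - ‖x' - w‖ ^ 2) / (2 * γ) + γ * ‖g‖ ^ 2 / 2 := by
    rw [hstep, norm_sub_smul_sub_sq]
    field_simp
    ring
  have hshift : ‖x' - w'‖ ^ 2 - ‖x' - w‖ ^ 2 ≤ ‖w - w'‖ * (r + r + (r + r)) := by
    have := sq_norm_sub_sq_norm_le (x' - w') (x' - w)
    rw [sub_sub_sub_cancel_left] at this
    exact this.trans <| mul_le_mul_of_nonneg_left
      (add_le_add (norm_sub_le_of_le hx' hw') (norm_sub_le_of_le hx' hw)) (norm_nonneg _)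
  have hmove : (‖x - w‖ ^ 2 - ‖x' - w‖ ^ 2) / (2 * γ)
      ≤ (‖x - w‖ ^ 2 - ‖x' - w'‖ ^ 2) / (2 * γ) + 2 * r / γ * ‖w - w'‖ := by
    calc _ ≤ (‖x - w‖ ^ 2 - ‖x' - w'‖ ^ 2 + ‖w - w'‖ * (r + r + (r + r))) / (2 * γ) := by
          gcongr; linarith
      _ = _ := by field_simp; ring
  have hbias_term : -⟪g - gradient f x, x - w⟫ ≤ b * (2 * r) :=
    (neg_le_abs _).trans <| (abs_real_inner_le_norm _ _).trans <|
      mul_le_mul hbias (by linarith [norm_sub_le_of_le hx hw]) (norm_nonneg _)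
        ((norm_nonneg _).trans hbias)
  have hvariance : γ * ‖g‖ ^ 2 / 2 ≤ γ * G / 2 := by gcongr
  linarith [hf.sub_le_inner_gradient hfx w]

end InnerProductSpace

theorem ogd_dynamic_regret_biased_general (d : ℕ)
    (γ r b G : ℝ) (hγ : 0 < γ)
    (T : ℕ)
    (ℓ : ℕ → EuclideanSpace ℝ (Fin d) → ℝ)
    (hdiff : ∀ t, 1 ≤ t → t ≤ T → Differentiable ℝ (ℓ t))
    (hconv : ∀ t, 1 ≤ t → t ≤ T → ConvexOn ℝ Set.univ (ℓ t))
    (θ η w : ℕ → EuclideanSpace ℝ (Fin d))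
    (hbias : ∀ t, 1 ≤ t → t ≤ T → ‖η t - gradient (ℓ t) (θ t)‖ ≤ b)
    (hηG : ∀ t, 1 ≤ t → t ≤ T → ‖η t‖ ^ 2 ≤ G)
    (hupd : ∀ t, 1 ≤ t → t ≤ T → θ (t + 1) = θ t - γ • η t)
    (hθ : ∀ t, 1 ≤ t → t ≤ T + 1 → ‖θ t‖ ≤ r)
    (hw : ∀ t, 1 ≤ t → t ≤ T + 1 → ‖w t‖ ≤ r) :
    ∑ t ∈ Finset.Icc 1 T, (ℓ t (θ t) - ℓ t (w t)) ≤
      2 * (T : ℝ) * b * r + 2 * r ^ 2 / γ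
        + (2 * r / γ) * ∑ t ∈ Finset.Icc 1 T, ‖w t - w (t + 1)‖
        + (T : ℝ) * γ * G / 2 := by
  set D : ℕ → ℝ := fun t => ‖θ t - w t‖ ^ 2
  have hround : ∀ t ∈ Icc 1 T, ℓ t (θ t) - ℓ t (w t) ≤ 2 * b * r
      + (D t - D (t + 1)) / (2 * γ) + 2 * r / γ * ‖w t - w (t + 1)‖ + γ * G / 2 := by
    intro t ht
    obtain ⟨h1t, htT⟩ := mem_Icc.mp ht
    exact (hconv t h1t htT).sub_le_of_gradient_step (hdiff t h1t htT _) hγ (hupd t h1t htT)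
      (hbias t h1t htT) (hηG t h1t htT) (hθ t h1t (by omega)) (hθ (t + 1) (by omega) (by omega))
      (hw t h1t (by omega)) (hw (t + 1) (by omega) (by omega))
  have htelescope : ∑ t ∈ Icc 1 T, (D t - D (t + 1)) = D 1 - D (T + 1) := by
    rw [← Ico_add_one_right_eq_Icc, ← neg_sub, ← sum_Ico_sub D (by omega), ← sum_neg_distrib]
    simp only [neg_sub]
  have hinitial : (D 1 - D (T + 1)) / (2 * γ) ≤ 2 * r ^ 2 / γ :=
    calc _ ≤ (r + r) ^ 2 / (2 * γ) := by
          gcongr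
          linarith [sq_nonneg ‖θ (T + 1) - w (T + 1)‖, pow_le_pow_left₀ (norm_nonneg _)
            (norm_sub_le_of_le (hθ 1 le_rfl (by omega)) (hw 1 le_rfl (by omega))) 2]
      _ = 2 * r ^ 2 / γ := by field_simp; ring
  calc _ ≤ ∑ t ∈ Icc 1 T, (2 * b * r + (D t - D (t + 1)) / (2 * γ)
          + 2 * r / γ * ‖w t - w (t + 1)‖ + γ * G / 2) := sum_le_sum hround
    _ = T * (2 * b * r) + (D 1 - D (T + 1)) / (2 * γ)
          + 2 * r / γ * ∑ t ∈ Icc 1 T, ‖w t - w (t + 1)‖ + T * (γ * G / 2) := by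
      rw [sum_add_distrib, sum_add_distrib, sum_add_distrib, sum_const, sum_const, ← sum_div,
        htelescope, ← mul_sum, Nat.card_Icc, nsmul_eq_mul, nsmul_eq_mul]
      simp
    _ ≤ _ := by linarith

/-- Dynamic regret bound for online gradient descent with biased gradient estimates
(deterministic version): with estimates `η t` satisfying `‖η t - ∇ℓ t (θ t)‖ ≤ b` and
`‖η t‖² ≤ G`, updates `θ (t+1) = θ t - γ • η t`, and iterates/comparators in the ball of
radius `r`, the dynamic regret is at most `2Tbr + 2r²/γ + (2r/γ)·V + TγG/2`. -/
theorem ogd_dynamic_regret_biased (d : ℕ) (hd : 0 < d)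
    (γ r b G : ℝ) (hγ : 0 < γ) (hr : 0 ≤ r) (hb : 0 ≤ b) (hG : 0 ≤ G)
    (T : ℕ) (hT : 0 < T)
    (ℓ : ℕ → EuclideanSpace ℝ (Fin d) → ℝ)
    (hdiff : ∀ t, 1 ≤ t → t ≤ T → Differentiable ℝ (ℓ t))
    (hconv : ∀ t, 1 ≤ t → t ≤ T → ConvexOn ℝ Set.univ (ℓ t))
    (θ η w : ℕ → EuclideanSpace ℝ (Fin d))
    (hbias : ∀ t, 1 ≤ t → t ≤ T → ‖η t - gradient (ℓ t) (θ t)‖ ≤ b)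
    (hηG : ∀ t, 1 ≤ t → t ≤ T → ‖η t‖ ^ 2 ≤ G)
    (hupd : ∀ t, 1 ≤ t → t ≤ T → θ (t + 1) = θ t - γ • η t)
    (hθ : ∀ t, 1 ≤ t → t ≤ T + 1 → ‖θ t‖ ≤ r)
    (hw : ∀ t, 1 ≤ t → t ≤ T + 1 → ‖w t‖ ≤ r) :
    ∑ t ∈ Finset.Icc 1 T, (ℓ t (θ t) - ℓ t (w t)) ≤
      2 * (T : ℝ) * b * r + 2 * r ^ 2 / γ
        + (2 * r / γ) * ∑ t ∈ Finset.Icc 1 T, ‖w t - w (t + 1)‖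
        + (T : ℝ) * γ * G / 2 :=
  ogd_dynamic_regret_biased_general d γ r b G hγ T ℓ hdiff hconv θ η w hbias hηG hupd hθ hw
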